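/- For every real 4×4 matrix S with Sᵀ·C·S = C (i.e. S ∈ Sp(4,ℝ) relative to C): S is invertible; S⁻¹·Γⱼ·S = Σᵢ O(S)ᵢⱼ·Γᵢ for j = 1,…,5, where O(S)ᵢⱼ = (1/4)·Tr(Γᵢᵀ·S⁻¹·Γⱼ·S); and O(S)ᵀ·η₅·O(S) = η₅. Thus conjugation by a symplectic matrix preserves the real span of Γ₁,…,Γ₅ and the resulting 5×5 coefficient matrix O(S) is orthogonal with respect to the nondegenerate symmetric form η₅ of signature (3,2), realizing the covering map from Sp(4,ℝ) onto a subgroup of the η₅-orthogonal group O(2,3). -/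

import Mathlib

open Matrix

/-- The five gamma matrices `Γ₁ = √2·(E₁₄ − E₂₃)`, `Γ₂ = √2·(E₁₂ + E₄₃)`,
`Γ₃ = diag(1,−1,1,−1)`, `Γ₄ = √2·(E₂₁ + E₃₄)`, `Γ₅ = √2·(E₄₁ − E₃₂)`.
They satisfy the normalization `(1/4)·Tr(Γᵢᵀ·Γⱼ) = δᵢⱼ`. -/
noncomputable def GammaMat : Fin 5 → Matrix (Fin 4) (Fin 4) ℝ :=
  ![!![0, 0, 0, Real.sqrt 2; 0, 0, -Real.sqrt 2, 0; 0, 0, 0, 0; 0, 0, 0, 0],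
    !![0, Real.sqrt 2, 0, 0; 0, 0, 0, 0; 0, 0, 0, 0; 0, 0, Real.sqrt 2, 0],
    !![1, 0, 0, 0; 0, -1, 0, 0; 0, 0, 1, 0; 0, 0, 0, -1],
    !![0, 0, 0, 0; Real.sqrt 2, 0, 0, 0; 0, 0, 0, Real.sqrt 2; 0, 0, 0, 0],
    !![0, 0, 0, 0; 0, 0, 0, 0; 0, -Real.sqrt 2, 0, 0; Real.sqrt 2, 0, 0, 0]]

/-- The `5×5` matrix `η₅` with `(η₅)ᵢⱼ = 1` iff `i + j = 6` (anti-diagonal). -/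
def eta5Mat : Matrix (Fin 5) (Fin 5) ℝ :=
  !![0, 0, 0, 0, 1; 0, 0, 0, 1, 0; 0, 0, 1, 0, 0; 0, 1, 0, 0, 0; 1, 0, 0, 0, 0]

/-- The skew-symmetric charge conjugation matrix `C = [[0, I₂], [−I₂, 0]]`. -/
def Cmat : Matrix (Fin 4) (Fin 4) ℝ :=
  !![0, 0, 1, 0; 0, 0, 0, 1; -1, 0, 0, 0; 0, -1, 0, 0]

/-- The vector image `O(S)ᵢⱼ = (1/4)·Tr(Γᵢᵀ·S⁻¹·Γⱼ·S)` of a symplectic matrix `S`. -/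
noncomputable def Omat5 (S : Matrix (Fin 4) (Fin 4) ℝ) : Matrix (Fin 5) (Fin 5) ℝ :=
  Matrix.of fun i j => (1 / 4 : ℝ) * ((GammaMat i)ᵀ * S⁻¹ * GammaMat j * S).trace

/-! Since `C² = -1`, the relation `SᵀCS = C` gives `S⁻¹ = -C Sᵀ C`, hence `C(S⁻¹MS) = Sᵀ(CM)S`.
So conjugation by `S` preserves the five-dimensional space of traceless `M` with `CM`
skew-symmetric; the `Γᵢ` form a basis of it, orthonormal for `(1/4)·Tr(AᵀB)`, which yields the
expansion with coefficients `O(S)`. Conjugation also preserves `Tr(AB)`, and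
`Tr(ΓᵢΓⱼ) = 4(η₅)ᵢⱼ`, so `O(S)` preserves `η₅`. -/

section Symplectic

variable {n R : Type*} [Fintype n] [DecidableEq n] [CommRing R] {J S : Matrix n n R}

theorem neg_mul_transpose_mul_mul_eq_one (hJ : J * J = -1) (hS : Sᵀ * J * S = J) :
    -(J * Sᵀ * J) * S = 1 :=
  calc -(J * Sᵀ * J) * S = -(J * (Sᵀ * J * S)) := by noncomm_ring
    _ = 1 := by rw [hS, hJ, neg_neg]

theorem isUnit_of_transpose_mul_mul_eq (hJ : J * J = -1) (hS : Sᵀ * J * S = J) : IsUnit S :=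
  .of_mul_eq_one_right _ (neg_mul_transpose_mul_mul_eq_one hJ hS)

theorem mul_inv_mul_mul_eq_transpose_mul (hJ : J * J = -1) (hS : Sᵀ * J * S = J)
    (M : Matrix n n R) : J * (S⁻¹ * M * S) = Sᵀ * (J * M) * S := by
  rw [inv_eq_left_inv (neg_mul_transpose_mul_mul_eq_one hJ hS)]
  calc J * (-(J * Sᵀ * J) * M * S) = -(J * J) * (Sᵀ * (J * M) * S) := by noncomm_ring
    _ = Sᵀ * (J * M) * S := by rw [hJ, neg_neg, Matrix.one_mul]

theorem transpose_mul_inv_mul_mul_eq_neg (hJ : J * J = -1) (hS : Sᵀ * J * S = J)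
    {M : Matrix n n R} (hM : (J * M)ᵀ = -(J * M)) :
    (J * (S⁻¹ * M * S))ᵀ = -(J * (S⁻¹ * M * S)) := by
  rw [mul_inv_mul_mul_eq_transpose_mul hJ hS, transpose_mul, transpose_mul, transpose_transpose,
    hM]
  simp only [Matrix.neg_mul, Matrix.mul_neg, Matrix.mul_assoc]

theorem transpose_mul_mul_eq_of_trace_mul {ι : Type*} [Fintype ι] (Γ : ι → Matrix n n R)
    {g O : Matrix ι ι R}
    (hΓ : ∀ i j, trace (Γ i * Γ j) = g i j) (hS : IsUnit S)
    (hO : ∀ j, S⁻¹ * Γ j * S = ∑ i, O i j • Γ i) :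
    Oᵀ * g * O = g := by
  ext a b
  have hdet : IsUnit S.det := (isUnit_iff_isUnit_det S).mp hS
  have htrace : trace ((S⁻¹ * Γ a * S) * (S⁻¹ * Γ b * S)) = g a b := by
    rw [show (S⁻¹ * Γ a * S) * (S⁻¹ * Γ b * S) = S⁻¹ * (Γ a * Γ b) * S by
      simp only [Matrix.mul_assoc, mul_nonsing_inv_cancel_left _ _ hdet], trace_conj' hS, hΓ]
  rw [← htrace, hO, hO, Finset.sum_mul_sum, trace_sum]
  simp only [mul_apply, transpose_apply, Finset.sum_mul, smul_mul_smul_comm, trace_sum, trace_smul,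
    hΓ, smul_eq_mul]
  rw [Finset.sum_comm]
  exact Finset.sum_congr rfl fun k _ => Finset.sum_congr rfl fun l _ => by ring

end Symplectic

theorem Cmat_mul_Cmat : Cmat * Cmat = -1 := by
  ext a b
  fin_cases a <;> fin_cases b <;> simp [Cmat, mul_apply, Fin.sum_univ_four]

theorem transpose_Cmat_mul_GammaMat (j : Fin 5) :
    (Cmat * GammaMat j)ᵀ = -(Cmat * GammaMat j) := by
  ext a b
  fin_cases j <;> fin_cases a <;> fin_cases b <;> simp [Cmat, GammaMat]

theorem trace_GammaMat (j : Fin 5) : (GammaMat j).trace = 0 := by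
  fin_cases j <;> simp [GammaMat, trace, Fin.sum_univ_four]

theorem trace_GammaMat_mul_GammaMat (i j : Fin 5) :
    (GammaMat i * GammaMat j).trace = 4 * eta5Mat i j := by
  fin_cases i <;> fin_cases j <;>
    simp [GammaMat, eta5Mat, trace, Fin.sum_univ_four, vecHead, vecTail] <;> norm_num

theorem eq_sum_trace_smul_GammaMat {M : Matrix (Fin 4) (Fin 4) ℝ}
    (hM : (Cmat * M)ᵀ = -(Cmat * M)) (htr : M.trace = 0) :
    M = ∑ i, ((1 / 4) * ((GammaMat i)ᵀ * M).trace) • GammaMat i := by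
  -- rows `0, 1, 2, 3` of `CM` are rows `2, 3, -0, -1` of `M`
  have e (a b : Fin 4) : (Cmat * M) b a = -(Cmat * M) a b := congr_fun₂ hM a b
  have e00 := e 0 0; have e01 := e 0 1; have e02 := e 0 2; have e03 := e 0 3
  have e11 := e 1 1; have e12 := e 1 2; have e13 := e 1 3
  have e22 := e 2 2; have e23 := e 2 3; have e33 := e 3 3
  simp only [mul_apply, Fin.sum_univ_four] at e00 e01 e02 e03 e11 e12 e13 e22 e23 e33
  simp [Cmat] at e00 e01 e02 e03 e11 e12 e13 e22 e23 e33
  simp only [trace, diag, Fin.sum_univ_four] at htr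
  have t0 : ((GammaMat 0)ᵀ * M).trace = √2 * (M 0 3 - M 1 2) := by
    simp [GammaMat, trace, mul_apply, Fin.sum_univ_four]; ring
  have t1 : ((GammaMat 1)ᵀ * M).trace = √2 * (M 0 1 + M 3 2) := by
    simp [GammaMat, trace, mul_apply, Fin.sum_univ_four]; ring
  have t2 : ((GammaMat 2)ᵀ * M).trace = M 0 0 - M 1 1 + M 2 2 - M 3 3 := by
    simp [GammaMat, trace, mul_apply, Fin.sum_univ_four]; ring
  have t3 : ((GammaMat 3)ᵀ * M).trace = √2 * (M 1 0 + M 2 3) := by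
    simp [GammaMat, trace, mul_apply, Fin.sum_univ_four]; ring
  have t4 : ((GammaMat 4)ᵀ * M).trace = √2 * (M 3 0 - M 2 1) := by
    simp [GammaMat, trace, mul_apply, Fin.sum_univ_four]; ring
  rw [Fin.sum_univ_five, t0, t1, t2, t3, t4]
  ext a b
  fin_cases a <;> fin_cases b <;>
    simp [GammaMat, vecHead, vecTail] <;> ring_nf <;> norm_num <;> linarith

/-- **The spinor-to-vector covering map `Sp(4,ℝ) → SO(2,3)`.**
If `Sᵀ·C·S = C` then `S` is invertible, conjugation by `S` preserves the span of the `Γᵢ`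
with coefficient matrix `O(S)`, and `O(S)ᵀ·η₅·O(S) = η₅`. -/
theorem stmt_5 (S : Matrix (Fin 4) (Fin 4) ℝ) (hS : Sᵀ * Cmat * S = Cmat) :
    IsUnit S ∧
    (∀ j : Fin 5, S⁻¹ * GammaMat j * S = ∑ i : Fin 5, Omat5 S i j • GammaMat i) ∧
    (Omat5 S)ᵀ * eta5Mat * Omat5 S = eta5Mat := by
  have hU : IsUnit S := isUnit_of_transpose_mul_mul_eq Cmat_mul_Cmat hS
  have hconj (j : Fin 5) : S⁻¹ * GammaMat j * S = ∑ i : Fin 5, Omat5 S i j • GammaMat i := by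
    simpa only [Omat5, of_apply, Matrix.mul_assoc] using eq_sum_trace_smul_GammaMat
      (transpose_mul_inv_mul_mul_eq_neg Cmat_mul_Cmat hS (transpose_Cmat_mul_GammaMat j))
      (by rw [trace_conj' hU, trace_GammaMat])
  refine ⟨hU, hconj, ?_⟩
  have h4 : (Omat5 S)ᵀ * ((4 : ℝ) • eta5Mat) * Omat5 S = (4 : ℝ) • eta5Mat :=
    transpose_mul_mul_eq_of_trace_mul GammaMat (by simp [trace_GammaMat_mul_GammaMat]) hU hconj
  rw [Matrix.mul_smul, Matrix.smul_mul] at h4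
  exact smul_right_injective _ four_ne_zero h4
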